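/- Let n ≥ 2 and let D, N₁, …, N_{n−1}, Ω be 2×2 complex matrices. Let M be the 4n×4n complex block matrix whose upper-left n×n block of 2×2 blocks is zero, whose upper-right block is the 2n×2n identity, whose lower-left block is the block-circulant matrix with first block row (D, N₁, …, N_{n−1}) (i.e., whose (p,q) block is D if p = q and N_{(q−p) mod n} if p ≠ q), and whose lower-right block is block-diagonal with each diagonal block equal to Ω. If ρ ∈ ℂ satisfies ρⁿ = 1, λ ∈ ℂ, and ξ ∈ ℂ² is a nonzero vector with (D + ρN₁ + ρ²N₂ + ⋯ + ρ^{n−1}N_{n−1})ξ + λΩξ = λ²ξ, then λ is an eigenvalue of M with eigenvector (ξ, ρξ, …, ρ^{n−1}ξ, λξ, λρξ, …, λρ^{n−1}ξ). -/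

import Mathlib

open Matrix Finset

lemma circ_sum_key {n : ℕ} (hn0 : 0 < n) (D : Matrix (Fin 2) (Fin 2) ℂ)
    (N : ℕ → Matrix (Fin 2) (Fin 2) ℂ) (ρ : ℂ) (hρ : ρ ^ n = 1)
    (ξ : Fin 2 → ℂ) (p : Fin n) (a : Fin 2) :
    ∑ q : Fin n, ρ ^ (q : ℕ) * (((if p = q then D else N (((q - p : Fin n) : ℕ))) *ᵥ ξ) a)
      = ρ ^ (p : ℕ) * ((D *ᵥ ξ) a + ∑ k ∈ Finset.Ico 1 n, ρ ^ k * ((N k *ᵥ ξ) a)) := by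
  haveI : NeZero n := ⟨hn0.ne'⟩
  have hmod : ∀ m : ℕ, ρ ^ (m % n) = ρ ^ m := by
    intro m
    conv_rhs => rw [← Nat.mod_add_div m n]
    rw [pow_add, pow_mul, hρ, one_pow, mul_one]
  have h1 : ∑ q : Fin n, ρ ^ (q : ℕ) * (((if p = q then D else N (((q - p : Fin n) : ℕ))) *ᵥ ξ) a)
      = ∑ k : Fin n, (fun j : ℕ => ρ ^ j * ρ ^ (p : ℕ) * (((if j = 0 then D else N j) *ᵥ ξ) a)) (k : ℕ) := by
    refine Fintype.sum_equiv (Equiv.subRight p) _ _ fun q => ?_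
    have hadd : (q - p) + p = q := sub_add_cancel q p
    have hpw : ρ ^ (q : ℕ) = ρ ^ ((q - p : Fin n) : ℕ) * ρ ^ (p : ℕ) := by
      conv_lhs => rw [← hadd]
      rw [Fin.add_def, hmod, pow_add]
    have hcond : (p = q) ↔ (((q - p : Fin n) : ℕ) = 0) := by
      have h0 : (((q - p : Fin n) : ℕ) = 0) ↔ (q - p : Fin n) = 0 := by
        rw [Fin.ext_iff]; simp
      rw [h0, sub_eq_zero, eq_comm]
    simp only [Equiv.subRight_apply, hpw, hcond]
  rw [h1, Fin.sum_univ_eq_sum_range (fun j : ℕ => ρ ^ j * ρ ^ (p : ℕ) * (((if j = 0 then D else N j) *ᵥ ξ) a)) n]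
  have hsplit : (Finset.range n).erase 0 = Finset.Ico 1 n := by
    ext j; simp [Finset.mem_erase, Finset.mem_range, Finset.mem_Ico]; omega
  rw [← Finset.sum_erase_add _ _ (Finset.mem_range.mpr hn0), hsplit]
  simp only [pow_zero, one_mul, if_pos rfl]
  rw [mul_add, mul_sum, add_comm]
  congr 1
  refine Finset.sum_congr rfl fun j hj => ?_
  rw [if_neg (by simp only [Finset.mem_Ico] at hj; omega)]
  ring

/-- Block-circulant reduction: the ansatz `δW_p = ρ^p ξ` turns the `4n × 4n`
eigenvalue problem into a `2 × 2` quadratic eigenvalue problem. -/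
theorem block_circulant_eigenvalue (n : ℕ) (hn : 2 ≤ n)
    (D Ω : Matrix (Fin 2) (Fin 2) ℂ) (N : ℕ → Matrix (Fin 2) (Fin 2) ℂ)
    (M : Matrix ((Fin n × Fin 2) ⊕ (Fin n × Fin 2))
        ((Fin n × Fin 2) ⊕ (Fin n × Fin 2)) ℂ)
    (hM : M = Matrix.fromBlocks 0 1
        (Matrix.of fun pa qb : Fin n × Fin 2 =>
          (if pa.1 = qb.1 then D else N (((qb.1 - pa.1 : Fin n) : ℕ))) pa.2 qb.2)
        (Matrix.of fun pa qb : Fin n × Fin 2 =>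
          (if pa.1 = qb.1 then Ω else 0) pa.2 qb.2))
    (ρ lam : ℂ) (hρ : ρ ^ n = 1)
    (ξ : Fin 2 → ℂ) (hξ : ξ ≠ 0)
    (hmain : Matrix.mulVec (D + ∑ k ∈ Finset.Ico 1 n, ρ ^ k • N k) ξ
        + lam • Matrix.mulVec Ω ξ = (lam ^ 2) • ξ)
    (v : (Fin n × Fin 2) ⊕ (Fin n × Fin 2) → ℂ)
    (hv : v = Sum.elim (fun pa : Fin n × Fin 2 => ρ ^ (pa.1 : ℕ) * ξ pa.2)
        (fun pa : Fin n × Fin 2 => lam * ρ ^ (pa.1 : ℕ) * ξ pa.2)) :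
    Matrix.mulVec M v = lam • v ∧ v ≠ 0 := by
  have hn0 : 0 < n := by omega
  subst hM hv
  constructor
  · rw [Matrix.fromBlocks_mulVec]
    funext s
    cases s with
    | inl pa =>
      simp only [Sum.elim_comp_inl, Sum.elim_comp_inr, Matrix.zero_mulVec,
        Matrix.one_mulVec, zero_add, Sum.elim_inl, Pi.add_apply, Pi.zero_apply,
        Pi.smul_apply, smul_eq_mul]
      ring
    | inr pa =>
      obtain ⟨p, a⟩ := pa
      simp only [Sum.elim_comp_inl, Sum.elim_comp_inr, Sum.elim_inr,
        Pi.add_apply, Pi.smul_apply, smul_eq_mul]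
      have hC : (Matrix.mulVec (Matrix.of fun pa qb : Fin n × Fin 2 =>
            (if pa.1 = qb.1 then D else N (((qb.1 - pa.1 : Fin n) : ℕ))) pa.2 qb.2)
            (fun pa : Fin n × Fin 2 => ρ ^ (pa.1 : ℕ) * ξ pa.2)) (p, a)
          = ∑ q : Fin n, ρ ^ (q : ℕ) *
            (((if p = q then D else N (((q - p : Fin n) : ℕ))) *ᵥ ξ) a) := by
        simp only [Matrix.mulVec, dotProduct, Fintype.sum_prod_type, Matrix.of_apply]
        refine Finset.sum_congr rfl fun q _ => ?_
        rw [Finset.mul_sum]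
        refine Finset.sum_congr rfl fun b _ => ?_
        ring
      have hΩ : (Matrix.mulVec (Matrix.of fun pa qb : Fin n × Fin 2 =>
            (if pa.1 = qb.1 then Ω else 0) pa.2 qb.2)
            (fun pa : Fin n × Fin 2 => lam * ρ ^ (pa.1 : ℕ) * ξ pa.2)) (p, a)
          = lam * ρ ^ (p : ℕ) * ((Ω *ᵥ ξ) a) := by
        simp only [Matrix.mulVec, dotProduct, Fintype.sum_prod_type, Matrix.of_apply]
        have hq : ∀ q : Fin n, ∑ b : Fin 2,
            ((if p = q then Ω else 0) : Matrix (Fin 2) (Fin 2) ℂ) a b * (lam * ρ ^ (q : ℕ) * ξ b)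
            = if p = q then lam * ρ ^ (p : ℕ) * ((Ω *ᵥ ξ) a) else 0 := by
          intro q
          by_cases h : p = q
          · subst h
            simp only [if_pos rfl, eq_self_iff_true, ite_true, Matrix.mulVec, dotProduct, Finset.mul_sum]
            refine Finset.sum_congr rfl fun b _ => ?_
            ring
          · simp [h]
        rw [Finset.sum_congr rfl fun q _ => hq q, Finset.sum_ite_eq, if_pos (Finset.mem_univ p)]
        rfl
      rw [hC, hΩ, circ_sum_key hn0 D N ρ hρ ξ p a]
      have hS : ((∑ k ∈ Finset.Ico 1 n, ρ ^ k • N k) *ᵥ ξ) a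
          = ∑ k ∈ Finset.Ico 1 n, ρ ^ k * ((N k *ᵥ ξ) a) := by
        simp only [Matrix.mulVec, dotProduct, Matrix.sum_apply, Matrix.smul_apply,
          smul_eq_mul, Finset.sum_mul, Finset.mul_sum]
        rw [Finset.sum_comm]
        refine Finset.sum_congr rfl fun k _ => Finset.sum_congr rfl fun b _ => ?_
        ring
      have hm : (D *ᵥ ξ) a + ∑ k ∈ Finset.Ico 1 n, ρ ^ k * ((N k *ᵥ ξ) a)
          + lam * ((Ω *ᵥ ξ) a) = lam ^ 2 * ξ a := by
        have := congrFun hmain a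
        rw [Matrix.add_mulVec, Pi.add_apply, Pi.add_apply, hS, Pi.smul_apply, Pi.smul_apply,
          smul_eq_mul, smul_eq_mul] at this
        exact this
      linear_combination ρ ^ (p : ℕ) * hm
  · intro h0
    apply hξ
    funext a
    have := congrFun h0 (Sum.inl ((⟨0, hn0⟩ : Fin n), a))
    simpa using this
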